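/- arXiv:2509.14137 — 6 statements merged into one kernel-verified Lean document; each statement's English description precedes it below -/
import Mathlib

section
/- Let (A,[-,-]) be a Lie algebra over a field K and let P : A → A be an averaging operator, i.e. [P(x),P(y)] = P([P(x),y]) for all x,y ∈ A. Then the bilinear multiplication x∘y := [P(x),y] makes A a Leibniz algebra, i.e. x∘(y∘z) = (x∘y)∘z + y∘(x∘z) for all x,y,z ∈ A. -/
/-- If `P` is an averaging operator on a Lie algebra `A`
(i.e. `⁅P x, P y⁆ = P ⁅P x, y⁆`), then `x ∘ y := ⁅P x, y⁆` makes `A` a Leibniz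
algebra: `x ∘ (y ∘ z) = (x ∘ y) ∘ z + y ∘ (x ∘ z)`. -/
theorem stmt0 (K A : Type*) [Field K] [LieRing A] [LieAlgebra K A]
    (P : A →ₗ[K] A) (hP : ∀ x y : A, ⁅P x, P y⁆ = P ⁅P x, y⁆) :
    ∀ x y z : A, ⁅P x, ⁅P y, z⁆⁆ = ⁅P ⁅P x, y⁆, z⁆ + ⁅P y, ⁅P x, z⁆⁆ := by
  intro x y z
  rw [← hP, leibniz_lie]
end

section
/- Let (A,[-,-]) be a Lie algebra over a field K with an averaging operator P (i.e. [P(x),P(y)] = P([P(x),y])), and let B be a nondegenerate symmetric invariant bilinear form on (A,[-,-]) (i.e. B([x,y],z) = B(x,[y,z])). Let ∘ be the induced Leibniz multiplication x∘y = [P(x),y]. Then B is left-invariant on (A,∘), i.e. B(x∘y,z) + B(y,x∘z) = 0 for all x,y,z. Moreover, if Q : A → A is a linear map with B(P(x),y) = B(x,Q(y)) for all x,y (the adjoint of P with respect to B), then the multiplications x≻y := [P(x),y] − Q([x,y]) and x≺y := Q([x,y]) make (A,≻,≺) an SDPL algebra whose sub-adjacent Leibniz algebra is (A,∘). -/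
/-- If `P` is an averaging operator on a Lie algebra `A` with a
nondegenerate symmetric invariant bilinear form `B`, then `B` is left-invariant
on the induced Leibniz algebra `x ∘ y = ⁅P x, y⁆`, and with `Q` the adjoint of
`P` with respect to `B`, the multiplications `x ≻ y = ⁅P x, y⁆ - Q ⁅x, y⁆` and
`x ≺ y = Q ⁅x, y⁆` make `A` an SDPL algebra with sub-adjacent Leibniz algebra
`(A, ∘)`. -/
theorem stmt9 {K A : Type*} [Field K] [LieRing A] [LieAlgebra K A]
    (P : A →ₗ[K] A) (hP : ∀ x y : A, ⁅P x, P y⁆ = P ⁅P x, y⁆)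
    (B : A →ₗ[K] A →ₗ[K] K) (hB : Function.Bijective B)
    (hBsymm : ∀ x y : A, B x y = B y x)
    (hBinv : ∀ x y z : A, B ⁅x, y⁆ z = B x ⁅y, z⁆)
    (Q : A →ₗ[K] A) (hQ : ∀ x y : A, B (P x) y = B x (Q y)) :
    -- `B` is left-invariant on the induced Leibniz algebra:
    (∀ x y z : A, B ⁅P x, y⁆ z + B y ⁅P x, z⁆ = 0) ∧
    -- `≺` is anticommutative:
    (∀ x y : A, Q ⁅x, y⁆ = -Q ⁅y, x⁆) ∧
    -- `x ≻ y + x ≺ y = x ∘ y`: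
    (∀ x y : A, (⁅P x, y⁆ - Q ⁅x, y⁆) + Q ⁅x, y⁆ = ⁅P x, y⁆) ∧
    -- the sub-adjacent multiplication `∘` is Leibniz:
    (∀ x y z : A, ⁅P x, ⁅P y, z⁆⁆ = ⁅P ⁅P x, y⁆, z⁆ + ⁅P y, ⁅P x, z⁆⁆) ∧
    -- the SDPL identities `x∘(y≺z) = (x∘y)≺z + y≺(x∘z) = x≺(y≺z)`:
    (∀ x y z : A, ⁅P x, Q ⁅y, z⁆⁆ = Q ⁅⁅P x, y⁆, z⁆ + Q ⁅y, ⁅P x, z⁆⁆) ∧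
    (∀ x y z : A, ⁅P x, Q ⁅y, z⁆⁆ = Q ⁅x, Q ⁅y, z⁆⁆) := by
  have key : ∀ u v : A, (∀ w, B u w = B v w) → u = v :=
    fun u v h => hB.injective (LinearMap.ext h)
  have h1 : ∀ x y z : A, B ⁅P x, y⁆ z + B y ⁅P x, z⁆ = 0 := by
    intro x y z
    have : B ⁅P x, y⁆ z = -(B y ⁅P x, z⁆) := by
      rw [← lie_skew (P x) y, map_neg, LinearMap.neg_apply, hBinv]
    rw [this, neg_add_cancel]
  have lhs : ∀ x y z w : A, B ⁅P x, Q ⁅y, z⁆⁆ w = -(B (P ⁅P x, w⁆) ⁅y, z⁆) := by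
    intro x y z w
    have e1 : B ⁅P x, Q ⁅y, z⁆⁆ w = -(B (Q ⁅y, z⁆) ⁅P x, w⁆) :=
      eq_neg_of_add_eq_zero_left (h1 x (Q ⁅y, z⁆) w)
    rw [e1, hBsymm, ← hQ]
  refine ⟨h1, ?_, ?_, ?_, ?_, ?_⟩
  · intro x y
    rw [← lie_skew x y, map_neg]
  · intro x y
    abel
  · intro x y z
    rw [← hP, leibniz_lie]
  · intro x y z
    apply key
    intro w
    rw [lhs, map_add, LinearMap.add_apply, hBsymm _ w, hBsymm _ w, ← hQ, ← hQ,
      ← map_add, ← leibniz_lie, ← hBinv (P w) (P x) ⁅y, z⁆, ← lie_skew (P w) (P x), hP]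
    simp
  · intro x y z
    apply key
    intro w
    rw [lhs, hBsymm _ w, ← hQ, ← hBinv (P w) x (Q ⁅y, z⁆), ← hQ, ← hP w x,
      ← lie_skew (P w) (P x), hP]
    simp
end

section
/- Let (A,[-,-]) be a Lie algebra over a field K with an averaging operator P, let ρ : A → End(V) be a representation of the Lie algebra A on a vector space V (i.e. ρ([x,y]) = ρ(x)ρ(y) − ρ(y)ρ(x)), and let α : V → V be a linear map. Equip A ⊕ V with the semidirect product Lie bracket [(x,u),(y,v)] = ([x,y], ρ(x)v − ρ(y)u). Then the linear map P + α : A ⊕ V → A ⊕ V, (x,u) ↦ (P(x), α(u)), is an averaging operator on the Lie algebra A ⊕ V if and only if ρ(P(x))α(v) = α(ρ(P(x))v) = α(ρ(x)α(v)) for all x ∈ A and v ∈ V (i.e. (ρ,α,V) is a representation of the averaging Lie algebra (A,[-,-],P)). -/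
/-- The semidirect product bracket on `A ⊕ V`:
`[(x,u),(y,v)] = ([x,y], ρ(x)v - ρ(y)u)`. -/
def sdBracket {K A V : Type*} [Field K] [LieRing A] [LieAlgebra K A]
    [AddCommGroup V] [Module K V]
    (ρ : A →ₗ[K] V →ₗ[K] V) : A × V → A × V → A × V :=
  fun p q => (⁅p.1, q.1⁆, ρ p.1 q.2 - ρ q.1 p.2)

/-- The map `P + α : A ⊕ V → A ⊕ V`, `(x, u) ↦ (P x, α u)`. -/
def sumMap {K A V : Type*} [Field K] [AddCommGroup A] [Module K A]
    [AddCommGroup V] [Module K V]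
    (P : A →ₗ[K] A) (α : V →ₗ[K] V) : A × V → A × V :=
  fun p => (P p.1, α p.2)

/-- For an averaging Lie algebra `(A, ⁅,⁆, P)`, a
representation `ρ : A → End(V)` and a linear map `α : V → V`, the map `P + α`
is an averaging operator on the semidirect product `A ⋉ V` iff
`ρ(P x) α(v) = α(ρ(P x) v) = α(ρ(x) α(v))` for all `x, v`. -/
theorem stmt13 {K A V : Type*} [Field K] [LieRing A] [LieAlgebra K A]
    [AddCommGroup V] [Module K V]
    (ρ : A →ₗ[K] V →ₗ[K] V)
    (hρ : ∀ (x y : A) (v : V), ρ ⁅x, y⁆ v = ρ x (ρ y v) - ρ y (ρ x v))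
    (P : A →ₗ[K] A) (hP : ∀ x y : A, ⁅P x, P y⁆ = P ⁅P x, y⁆)
    (α : V →ₗ[K] V) :
    (∀ p q : A × V,
        sdBracket ρ (sumMap P α p) (sumMap P α q)
          = sumMap P α (sdBracket ρ (sumMap P α p) q)) ↔
    (∀ (x : A) (v : V),
        ρ (P x) (α v) = α (ρ (P x) v) ∧ α (ρ (P x) v) = α (ρ x (α v))) := by
  constructor
  · intro h x v
    have h1 := h (x, 0) (0, v)
    have h2 := h (0, v) (x, 0)
    simp [sdBracket, sumMap, Prod.ext_iff] at h1 h2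
    have e1 : ρ (P x) (α v) = α (ρ (P x) v) := by simpa using h1
    have e2 : ρ (P x) (α v) = α (ρ x (α v)) := by
      have := h2
      simpa using this
    exact ⟨e1, e1 ▸ e2⟩
  · intro h p q
    obtain ⟨x, u⟩ := p
    obtain ⟨y, v⟩ := q
    simp only [sdBracket, sumMap, Prod.mk.injEq]
    refine ⟨hP x y, ?_⟩
    rw [map_sub, (h x v).1, (h y u).1.trans (h y u).2]
end

section
/- Let (A,[-,-]) be a Lie algebra over a field K with an averaging operator P, and let B be a nondegenerate invariant bilinear form on (A,[-,-]) (i.e. B([x,y],z) = B(x,[y,z]) for all x,y,z). Suppose Q : A → A is a linear map with B(P(x),y) = B(x,Q(y)) for all x,y (the adjoint of P with respect to B). Then Q is admissible to (A,[-,-],P): [P(x),Q(y)] = Q([P(x),y]) = Q([x,Q(y)]) for all x,y ∈ A. Moreover, the linear map φ : A → A*, φ(x) = B(x,·), satisfies φ([x,y]) = ad*(x)φ(y) and φ(P(x)) = Q*(φ(x)) for all x,y ∈ A, where ⟨ad*(x)a*, z⟩ = −⟨a*, [x,z]⟩ and ⟨Q*(a*), z⟩ = ⟨a*, Q(z)⟩;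 hence (ad*, Q*, A*) and (ad, P, A) are equivalent representations of the averaging Lie algebra (A,[-,-],P). -/
/-- The coadjoint action `ad*(x)` of a Lie algebra on its dual space:
`⟨ad*(x) f, y⟩ = -⟨f, ⁅x, y⁆⟩`. -/
def coadAct {K A : Type*} [Field K] [LieRing A] [LieAlgebra K A]
    (x : A) (f : A →ₗ[K] K) : A →ₗ[K] K :=
  -(f ∘ₗ ((LieAlgebra.ad K A x : Module.End K A) : A →ₗ[K] A))

/-- For an averaging Lie algebra `(A, ⁅,⁆, P)` with a
nondegenerate invariant bilinear form `B`, the adjoint map `Q` of `P` with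
respect to `B` is admissible to `(A, ⁅,⁆, P)`, and `φ(x) = B(x, ·)` intertwines
`(ad, P, A)` with `(ad*, Q*, A*)`, so these are equivalent representations of
the averaging Lie algebra. -/
theorem stmt15 {K A : Type*} [Field K] [LieRing A] [LieAlgebra K A]
    (P : A →ₗ[K] A) (hP : ∀ x y : A, ⁅P x, P y⁆ = P ⁅P x, y⁆)
    (B : A →ₗ[K] A →ₗ[K] K) (hB : Function.Bijective B)
    (hBinv : ∀ x y z : A, B ⁅x, y⁆ z = B x ⁅y, z⁆)
    (Q : A →ₗ[K] A) (hQ : ∀ x y : A, B (P x) y = B x (Q y)) :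
    -- `Q` is admissible to `(A, ⁅,⁆, P)`:
    (∀ x y : A, ⁅P x, Q y⁆ = Q ⁅P x, y⁆ ∧ Q ⁅P x, y⁆ = Q ⁅x, Q y⁆) ∧
    -- `φ = B` intertwines the adjoint and coadjoint data:
    (∀ x y : A, B ⁅x, y⁆ = coadAct x (B y)) ∧
    (∀ x : A, B (P x) = Q.dualMap (B x)) := by
  -- right nondegeneracy from surjectivity
  have heq : ∀ u v : A, (∀ w : A, B w u = B w v) → u = v := by
    intro u v h
    have h0 : ∀ φ : Module.Dual K A, φ (u - v) = 0 := by
      intro φ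
      obtain ⟨w, rfl⟩ := hB.2 φ
      simp [h w]
    have := (Module.forall_dual_apply_eq_zero_iff K (u - v)).mp h0
    exact sub_eq_zero.mp this
  -- variant of hP
  have key : ∀ w x : A, ⁅P w, P x⁆ = P ⁅w, P x⁆ := by
    intro w x
    calc ⁅P w, P x⁆ = -⁅P x, P w⁆ := (lie_skew (P w) (P x)).symm
      _ = -(P ⁅P x, w⁆) := by rw [hP]
      _ = P (-⁅P x, w⁆) := by rw [map_neg]
      _ = P ⁅w, P x⁆ := by rw [lie_skew]
  refine ⟨?_, ?_, ?_⟩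
  · intro x y
    have h1 : ⁅P x, Q y⁆ = Q ⁅P x, y⁆ := by
      apply heq
      intro w
      calc B w ⁅P x, Q y⁆ = B ⁅w, P x⁆ (Q y) := (hBinv w (P x) (Q y)).symm
        _ = B (P ⁅w, P x⁆) y := (hQ _ _).symm
        _ = B ⁅P w, P x⁆ y := by rw [key]
        _ = B (P w) ⁅P x, y⁆ := hBinv _ _ _
        _ = B w (Q ⁅P x, y⁆) := hQ _ _
    have h2 : Q ⁅P x, y⁆ = Q ⁅x, Q y⁆ := by
      apply heq
      intro w
      calc B w (Q ⁅P x, y⁆) = B (P w) ⁅P x, y⁆ := (hQ _ _).symm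
        _ = B ⁅P w, P x⁆ y := (hBinv _ _ _).symm
        _ = B (P ⁅P w, x⁆) y := by rw [hP]
        _ = B ⁅P w, x⁆ (Q y) := hQ _ _
        _ = B (P w) ⁅x, Q y⁆ := hBinv _ _ _
        _ = B w (Q ⁅x, Q y⁆) := hQ _ _
    exact ⟨h1, h2⟩
  · intro x y
    ext z
    have : B y ⁅x, z⁆ = B ⁅y, x⁆ z := (hBinv y x z).symm
    simp only [coadAct, LinearMap.neg_apply, LinearMap.comp_apply, LieAlgebra.ad_apply]
    rw [this, ← LinearMap.neg_apply, ← map_neg, lie_skew]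
  · intro x
    ext z
    exact hQ x z
end

section
/- Let (A,[-,-],P,Q) be an admissible averaging Lie algebra over a field K, i.e. (A,[-,-]) is a Lie algebra, P is an averaging operator, and [P(x),Q(y)] = Q([P(x),y]) = Q([x,Q(y)]) for all x,y ∈ A. Define x≻y := [P(x),y] − Q([x,y]) and x≺y := Q([x,y]). Then (A,≻,≺) is an SDPL algebra: ≺ is anticommutative, x∘y := x≻y + x≺y = [P(x),y] makes (A,∘) a Leibniz algebra, and x∘(y≺z) = (x∘y)≺z + y≺(x∘z) = x≺(y≺z) for all x,y,z ∈ A. -/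
/-- An admissible averaging Lie algebra `(A, ⁅,⁆, P, Q)` gives
an SDPL algebra via `x ≻ y = ⁅P x, y⁆ - Q ⁅x, y⁆` and `x ≺ y = Q ⁅x, y⁆`, whose
sub-adjacent Leibniz algebra is `x ∘ y = ⁅P x, y⁆`. -/
theorem stmt16 {K A : Type*} [Field K] [LieRing A] [LieAlgebra K A]
    (P Q : A →ₗ[K] A) (hP : ∀ x y : A, ⁅P x, P y⁆ = P ⁅P x, y⁆)
    (hQ : ∀ x y : A, ⁅P x, Q y⁆ = Q ⁅P x, y⁆ ∧ Q ⁅P x, y⁆ = Q ⁅x, Q y⁆) :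
    -- `≺` is anticommutative:
    (∀ x y : A, Q ⁅x, y⁆ = -Q ⁅y, x⁆) ∧
    -- `x ≻ y + x ≺ y = x ∘ y = ⁅P x, y⁆`:
    (∀ x y : A, (⁅P x, y⁆ - Q ⁅x, y⁆) + Q ⁅x, y⁆ = ⁅P x, y⁆) ∧
    -- `∘` is a Leibniz multiplication:
    (∀ x y z : A, ⁅P x, ⁅P y, z⁆⁆ = ⁅P ⁅P x, y⁆, z⁆ + ⁅P y, ⁅P x, z⁆⁆) ∧
    -- the SDPL identities `x∘(y≺z) = (x∘y)≺z + y≺(x∘z) = x≺(y≺z)`: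
    (∀ x y z : A, ⁅P x, Q ⁅y, z⁆⁆ = Q ⁅⁅P x, y⁆, z⁆ + Q ⁅y, ⁅P x, z⁆⁆) ∧
    (∀ x y z : A, ⁅P x, Q ⁅y, z⁆⁆ = Q ⁅x, Q ⁅y, z⁆⁆) := by
  refine ⟨fun x y => by rw [← lie_skew, map_neg],
    fun x y => by abel,
    fun x y z => by rw [← hP, leibniz_lie],
    fun x y z => by rw [(hQ x _).1, leibniz_lie, map_add],
    fun x y z => by rw [(hQ x _).1, (hQ x _).2]⟩
end

section
/- Let A be a finite-dimensional vector space over a field K carrying a Lie bracket [-,-]_A, and let A* carry a Lie bracket [-,-]_{A*}. Define ad*_A : A → End(A*) by ⟨ad*_A(x)a*, y⟩ = −⟨a*, [x,y]_A⟩, and ad*_{A*} : A* → End(A) by ⟨b*, ad*_{A*}(a*)x⟩ = −⟨[a*,b*]_{A*}, x⟩ (which exists and is unique since A is finite-dimensional). Assume that the bracket on A ⊕ A* given by [x+a*, y+b*]_d = [x,y]_A + ad*_{A*}(a*)y − ad*_{A*}(b*)x + [a*,b*]_{A*} + ad*_A(x)b* − ad*_A(y)a* is a Lie bracket. Let P,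 Q : A → A be linear maps and define Q* : A* → A* by ⟨Q*(a*), x⟩ = ⟨a*, Q(x)⟩. Then the map P + Q* : A ⊕ A* → A ⊕ A*, x + a* ↦ P(x) + Q*(a*), is an averaging operator on (A ⊕ A*, [-,-]_d) if and only if for all x ∈ A and a*, b* ∈ A*: (i) [P(x),P(y)]_A = P([P(x),y]_A) for all y ∈ A; (ii) [Q*(a*), Q*(b*)]_{A*} = Q*([Q*(a*), b*]_{A*}); (iii) ad*_{A*}(Q*(a*))P(x) = P(ad*_{A*}(Q*(a*))x) = P(ad*_{A*}(a*)P(x)); (iv) ad*_A(P(x))Q*(a*) = Q*(ad*_A(P(x))a*) = Q*(ad*_A(x)Q*(a*)). -/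
/-- The double bracket on `A ⊕ A*`:
`[x + a*, y + b*]_d = [x,y]_A + ad*_{A*}(a*) y - ad*_{A*}(b*) x
  + [a*,b*]_{A*} + ad*_A(x) b* - ad*_A(y) a*`,
where `brs` is the bracket on `A*` and `coad` realizes `ad*_{A*}`. -/
def dBracket {K A : Type*} [Field K] [LieRing A] [LieAlgebra K A]
    (brs : (A →ₗ[K] K) →ₗ[K] (A →ₗ[K] K) →ₗ[K] (A →ₗ[K] K))
    (coad : (A →ₗ[K] K) →ₗ[K] A →ₗ[K] A) :
    A × (A →ₗ[K] K) → A × (A →ₗ[K] K) → A × (A →ₗ[K] K) :=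
  fun p q =>
    (⁅p.1, q.1⁆ + coad p.2 q.1 - coad q.2 p.1,
     brs p.2 q.2 + coadAct p.1 q.2 - coadAct q.1 p.2)

lemma coadAct_zero {K A : Type*} [Field K] [LieRing A] [LieAlgebra K A]
    (x : A) : coadAct (K := K) x 0 = 0 := by
  simp [coadAct]

lemma coadAct_zero' {K A : Type*} [Field K] [LieRing A] [LieAlgebra K A]
    (f : A →ₗ[K] K) : coadAct (0 : A) f = 0 := by
  simp [coadAct]

/-- For a finite-dimensional Lie algebra `A` and a Lie bracket
`brs` on `A*`, with `coad` the map `ad*_{A*} : A* → End(A)` characterized by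
`⟨b*, coad(a*) x⟩ = -⟨[a*,b*]_{A*}, x⟩`, assume the double bracket on `A ⊕ A*`
is a Lie bracket.  Then `P + Q*` is an averaging operator on `A ⊕ A*` iff the
four conditions (i)–(iv) hold. -/
theorem stmt18 {K A : Type*} [Field K] [LieRing A] [LieAlgebra K A]
    [FiniteDimensional K A]
    (brs : (A →ₗ[K] K) →ₗ[K] (A →ₗ[K] K) →ₗ[K] (A →ₗ[K] K))
    (hbrs_alt : ∀ f : A →ₗ[K] K, brs f f = 0)
    (hbrs_jac : ∀ f g h : A →ₗ[K] K,
      brs f (brs g h) = brs (brs f g) h + brs g (brs f h))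
    (coad : (A →ₗ[K] K) →ₗ[K] A →ₗ[K] A)
    (hcoad : ∀ (f g : A →ₗ[K] K) (x : A), g (coad f x) = -(brs f g) x)
    (hd_alt : ∀ p : A × (A →ₗ[K] K), dBracket brs coad p p = 0)
    (hd_jac : ∀ p q r : A × (A →ₗ[K] K),
      dBracket brs coad p (dBracket brs coad q r)
        = dBracket brs coad (dBracket brs coad p q) r
          + dBracket brs coad q (dBracket brs coad p r))
    (P Q : A →ₗ[K] A) :
    (∀ p q : A × (A →ₗ[K] K),
        dBracket brs coad (P p.1, Q.dualMap p.2) (P q.1, Q.dualMap q.2)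
          = ((P (dBracket brs coad (P p.1, Q.dualMap p.2) q).1),
             Q.dualMap (dBracket brs coad (P p.1, Q.dualMap p.2) q).2)) ↔
    ((∀ x y : A, ⁅P x, P y⁆ = P ⁅P x, y⁆) ∧
     (∀ f g : A →ₗ[K] K,
        brs (Q.dualMap f) (Q.dualMap g) = Q.dualMap (brs (Q.dualMap f) g)) ∧
     (∀ (f : A →ₗ[K] K) (x : A),
        coad (Q.dualMap f) (P x) = P (coad (Q.dualMap f) x) ∧
        P (coad (Q.dualMap f) x) = P (coad f (P x))) ∧
     (∀ (x : A) (f : A →ₗ[K] K),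
        coadAct (P x) (Q.dualMap f) = Q.dualMap (coadAct (P x) f) ∧
        Q.dualMap (coadAct (P x) f) = Q.dualMap (coadAct x (Q.dualMap f)))) := by
  
  constructor
  · intro h
    refine ⟨?_, ?_, ?_, ?_⟩
    · intro x y
      have := congrArg Prod.fst (h (x, 0) (y, 0))
      simpa [dBracket, coadAct] using this
    · intro f g
      have := congrArg Prod.snd (h (0, f) (0, g))
      simpa [dBracket, coadAct_zero, coadAct_zero'] using this
    · intro f x
      have h1 := congrArg Prod.fst (h (0, f) (x, 0))
      have h2 := congrArg Prod.fst (h (x, 0) (0, f))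
      simp [dBracket, coadAct] at h1 h2
      exact ⟨h1, h1.symm.trans h2⟩
    · intro x f
      have h1 := congrArg Prod.snd (h (x, 0) (0, f))
      have h2 := congrArg Prod.snd (h (0, f) (x, 0))
      simp [dBracket, coadAct_zero, coadAct_zero'] at h1 h2
      exact ⟨h1, h1.symm.trans h2⟩
  · rintro ⟨h1, h2, h3, h4⟩ ⟨x, f⟩ ⟨y, g⟩
    simp only [dBracket]
    refine Prod.ext ?_ ?_
    · simp only [map_add, map_sub]
      rw [h1, (h3 f y).1, (h3 g x).1.trans (h3 g x).2]
    · simp only [map_add, map_sub]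
      rw [h2, (h4 x g).1, (h4 y f).1.trans (h4 y f).2]
end
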